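/- arXiv:2605.05717 — 3 statements merged into one kernel-verified Lean document; each statement's English description precedes it below -/
import Mathlib

section
/- Consider the time-invariant setting F_t = F and H_t^{(k)} = H^{(k)} for all t, and let S_K := span of the columns of (F^⊤)^t H^{(ℓ)⊤} over all ℓ ∈ {1,…,K} and all t ∈ ℕ. If the range of H^{(K+1)⊤} is NOT contained in S_K, then for every horizon T ≥ 1 the kernel strictly shrinks: ker W_o^{(K+1)}(T) ⊊ ker W_o^{(K)}(T); in particular rank W_o^{(K+1)}(T) > rank W_o^{(K)}(T). -/
/-!
Since every `R k` is positive definite, `W(T) x = 0` holds exactly when `H k (F ^ t x) = 0` for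
every channel `k` and every `t < T`; in particular `ker W^(K+1)(T) ⊆ ker W^(K)(T)`. A vector of
`range H^(K+1)ᵀ` outside `S_K` is separated from `S_K` by a vector `x` orthogonal to `S_K`: then
`x` is invisible to the first `K` channels at all times while `H^(K+1) x ≠ 0`, so for `T ≥ 1` it
lies in `ker W^(K)(T)` but not in `ker W^(K+1)(T)`. Rank–nullity turns this into the rank gap.
-/

open Matrix Finset
open scoped ComplexOrder

namespace Matrix

variable {𝕜 : Type*} [RCLike 𝕜] {m n : Type*} [Fintype m] [Fintype n]

theorem PosSemidef.sum_mulVec_eq_zero_iff {ι : Type*} {s : Finset ι} {A : ι → Matrix n n 𝕜}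
    (hA : ∀ i ∈ s, (A i).PosSemidef) (x : n → 𝕜) :
    (∑ i ∈ s, A i) *ᵥ x = 0 ↔ ∀ i ∈ s, A i *ᵥ x = 0 := by
  rw [← (posSemidef_sum s hA).dotProduct_mulVec_zero_iff, sum_mulVec, dotProduct_sum,
    sum_eq_zero_iff_of_nonneg fun i hi => (hA i hi).dotProduct_mulVec_nonneg x]
  exact forall₂_congr fun i hi => (hA i hi).dotProduct_mulVec_zero_iff x

theorem PosSemidef.conjTranspose_mul_mul_same_mulVec_eq_zero_iff {A : Matrix m m 𝕜}
    (hA : A.PosSemidef) (B : Matrix m n 𝕜) (x : n → 𝕜) :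
    (Bᴴ * A * B) *ᵥ x = 0 ↔ A *ᵥ (B *ᵥ x) = 0 := by
  rw [← (hA.conjTranspose_mul_mul_same B).dotProduct_mulVec_zero_iff,
    ← hA.dotProduct_mulVec_zero_iff, ← mulVec_mulVec, ← mulVec_mulVec, dotProduct_mulVec,
    vecMul_conjTranspose, star_star]

theorem PosDef.mulVec_eq_zero_iff {A : Matrix n n 𝕜} (hA : A.PosDef) {x : n → 𝕜} :
    A *ᵥ x = 0 ↔ x = 0 := by
  refine ⟨fun h => by_contra fun hx => ?_, fun h => h ▸ mulVec_zero A⟩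
  simpa [h] using hA.dotProduct_mulVec_pos hx

theorem rank_lt_rank_of_ker_mulVecLin_lt {K m n : Type*} [Field K] [Fintype n]
    {A B : Matrix m n K} (h : LinearMap.ker A.mulVecLin < LinearMap.ker B.mulVecLin) :
    B.rank < A.rank := by
  have hA := LinearMap.finrank_range_add_finrank_ker A.mulVecLin
  have hB := LinearMap.finrank_range_add_finrank_ker B.mulVecLin
  have := Submodule.finrank_lt_finrank_of_lt h
  unfold rank
  omega

end Matrix

theorem Submodule.exists_dotProduct_eq_zero_of_notMem {K n : Type*} [Field K] [Fintype n]
    [DecidableEq n] {S : Submodule K (n → K)} {v : n → K} (hv : v ∉ S) :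
    ∃ x : n → K, (∀ s ∈ S, x ⬝ᵥ s = 0) ∧ x ⬝ᵥ v ≠ 0 := by
  obtain ⟨f, hfv, hfS⟩ := S.exists_dual_map_eq_bot_of_notMem hv inferInstance
  have hf : ∀ y, (dotProductEquiv K n).symm f ⬝ᵥ y = f y := fun y =>
    congrArg (· y) ((dotProductEquiv K n).apply_symm_apply f)
  refine ⟨(dotProductEquiv K n).symm f, fun s hs => ?_, by rwa [hf]⟩
  rw [hf, ← Submodule.mem_bot K, ← hfS]
  exact Submodule.mem_map_of_mem hs

section Observability

variable {n ι : Type*} [Fintype n] [DecidableEq n] [Fintype ι] {p : ι → Type*}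
  [∀ k, Fintype (p k)] [∀ k, DecidableEq (p k)]

noncomputable def observabilityGramian (F : Matrix n n ℝ) (H : ∀ k, Matrix (p k) n ℝ)
    (R : ∀ k, Matrix (p k) (p k) ℝ) (T : ℕ) : Matrix n n ℝ :=
  ∑ t ∈ range T, (F ^ t)ᵀ * (∑ k, (H k)ᵀ * (R k)⁻¹ * H k) * F ^ t

theorem observabilityGramian_mulVec_eq_zero_iff (F : Matrix n n ℝ) (H : ∀ k, Matrix (p k) n ℝ)
    {R : ∀ k, Matrix (p k) (p k) ℝ} (hR : ∀ k, (R k).PosDef) (T : ℕ) (x : n → ℝ) :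
    observabilityGramian F H R T *ᵥ x = 0 ↔ ∀ t < T, ∀ k, H k *ᵥ (F ^ t *ᵥ x) = 0 := by
  have hterm (k) : ((H k)ᵀ * (R k)⁻¹ * H k).PosSemidef := by
    simpa using (hR k).inv.posSemidef.conjTranspose_mul_mul_same (H k)
  have hinfo : (∑ k, (H k)ᵀ * (R k)⁻¹ * H k).PosSemidef :=
    posSemidef_sum _ fun k _ => hterm k
  have hinfo_mulVec (y : n → ℝ) :
      (∑ k, (H k)ᵀ * (R k)⁻¹ * H k) *ᵥ y = 0 ↔ ∀ k, H k *ᵥ y = 0 := by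
    simp only [PosSemidef.sum_mulVec_eq_zero_iff fun k _ => hterm k, mem_univ, true_implies]
    refine forall_congr' fun k => ?_
    rw [← conjTranspose_eq_transpose_of_trivial,
      (hR k).inv.posSemidef.conjTranspose_mul_mul_same_mulVec_eq_zero_iff, (hR k).inv.mulVec_eq_zero_iff]
  have hstep (t) : ((F ^ t)ᵀ * (∑ k, (H k)ᵀ * (R k)⁻¹ * H k) * F ^ t).PosSemidef := by
    simpa using hinfo.conjTranspose_mul_mul_same (F ^ t)
  rw [observabilityGramian, PosSemidef.sum_mulVec_eq_zero_iff fun t _ => hstep t]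
  simp only [mem_range]
  refine forall₂_congr fun t _ => ?_
  rw [← conjTranspose_eq_transpose_of_trivial,
    hinfo.conjTranspose_mul_mul_same_mulVec_eq_zero_iff, hinfo_mulVec]

end Observability

theorem exists_unobservable_of_range_transpose_not_le {K n ι q : Type*} [Field K] [Fintype n]
    [DecidableEq n] [Fintype q] {p : ι → Type*} [∀ i, Fintype (p i)]
    (F : Matrix n n K) (G : ∀ i, Matrix (p i) n K) (G₀ : Matrix q n K)
    (h : ¬ LinearMap.range G₀ᵀ.mulVecLin ≤ Submodule.span K
      {x | ∃ (i : ι) (t : ℕ) (c : p i), x = fun r => ((Fᵀ) ^ t * (G i)ᵀ) r c}) :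
    ∃ x, (∀ i t, G i *ᵥ (F ^ t *ᵥ x) = 0) ∧ G₀ *ᵥ x ≠ 0 := by
  obtain ⟨_, ⟨u, rfl⟩, hv⟩ := SetLike.not_le_iff_exists.1 h
  obtain ⟨x, hxS, hxv⟩ := Submodule.exists_dotProduct_eq_zero_of_notMem hv
  refine ⟨x, fun i t => funext fun c => ?_, fun h0 => hxv ?_⟩
  · have := hxS _ (Submodule.subset_span ⟨i, t, c, rfl⟩)
    rw [← transpose_pow, ← transpose_mul] at this
    rw [mulVec_mulVec]
    exact (dotProduct_comm _ _).trans this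
  · rw [mulVecLin_apply, dotProduct_mulVec, vecMul_transpose, h0, zero_dotProduct]

open Matrix Finset in
theorem non_redundant_channel_strict_gain
    (n K : ℕ) (pdim : Fin (K + 1) → ℕ)
    (F : Matrix (Fin n) (Fin n) ℝ)
    (H : (k : Fin (K + 1)) → Matrix (Fin (pdim k)) (Fin n) ℝ)
    (R : (k : Fin (K + 1)) → Matrix (Fin (pdim k)) (Fin (pdim k)) ℝ)
    (hR : ∀ k, (R k).PosDef)
    (WK WK1 : ℕ → Matrix (Fin n) (Fin n) ℝ)
    (hWK : ∀ T, WK T = ∑ t ∈ Finset.range T,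
      (F ^ t)ᵀ * (∑ k : Fin K, (H k.castSucc)ᵀ * (R k.castSucc)⁻¹ * H k.castSucc) * F ^ t)
    (hWK1 : ∀ T, WK1 T = ∑ t ∈ Finset.range T,
      (F ^ t)ᵀ * (∑ k : Fin (K + 1), (H k)ᵀ * (R k)⁻¹ * H k) * F ^ t)
    (SK : Submodule ℝ (Fin n → ℝ))
    (hSK : SK = Submodule.span ℝ
      {x : Fin n → ℝ | ∃ (ℓ : Fin K) (t : ℕ) (c : Fin (pdim ℓ.castSucc)),
        x = fun r => ((Fᵀ) ^ t * (H ℓ.castSucc)ᵀ) r c})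
    (hRange : ¬ LinearMap.range ((H (Fin.last K))ᵀ).mulVecLin ≤ SK) :
    ∀ T, 1 ≤ T →
      LinearMap.ker (WK1 T).mulVecLin < LinearMap.ker (WK T).mulVecLin ∧
      (WK T).rank < (WK1 T).rank := by
  intro T hT
  have hWK_ker (x) : WK T *ᵥ x = 0 ↔ ∀ t < T, ∀ ℓ : Fin K, H ℓ.castSucc *ᵥ (F ^ t *ᵥ x) = 0 :=
    hWK T ▸ observabilityGramian_mulVec_eq_zero_iff F _ (fun ℓ => hR ℓ.castSucc) T x
  have hWK1_ker (x) : WK1 T *ᵥ x = 0 ↔ ∀ t < T, ∀ k, H k *ᵥ (F ^ t *ᵥ x) = 0 :=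
    hWK1 T ▸ observabilityGramian_mulVec_eq_zero_iff F H hR T x
  obtain ⟨x, hx_unobserved, hx_last⟩ := exists_unobservable_of_range_transpose_not_le F
    (fun ℓ : Fin K => H ℓ.castSucc) (H (Fin.last K)) (hSK ▸ hRange)
  have hlt : LinearMap.ker (WK1 T).mulVecLin < LinearMap.ker (WK T).mulVecLin := by
    refine SetLike.lt_iff_le_and_exists.2 ⟨fun y hy => ?_, x, ?_, ?_⟩
    · simp only [LinearMap.mem_ker, mulVecLin_apply, hWK_ker, hWK1_ker] at hy ⊢
      exact fun t ht ℓ => hy t ht ℓ.castSucc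
    · simpa [hWK_ker] using fun t _ ℓ => hx_unobserved ℓ t
    · simpa [hWK1_ker] using ⟨0, hT, Fin.last K, by simpa using hx_last⟩
  exact ⟨hlt, rank_lt_rank_of_ker_mulVecLin_lt hlt⟩
end

section
/- Let P ∈ ℝ^{n×n} be symmetric positive definite, F ∈ ℝ^{n×n} with det F = 1, Q ∈ ℝ^{n×n} symmetric positive semidefinite, and S ∈ ℝ^{n×n} symmetric positive semidefinite. Define the prior covariance P' = F P F^⊤ + Q and the posterior covariance P₊ = (P'^{-1} + S)^{-1}. Then the one-step change in uncertainty volume decomposes exactly as log det P₊ − log det P = log det(I + Q (F P F^⊤)^{-1}) − log det(I + P' S), where the first term is the temporal (process-noise) contribution and the second term is the instantaneous spatial (sensor-information) contribution. -/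
/-! With `A = F P Fᵀ`, `det A = det P` because `det F = 1`, and both correction terms factor
through the prior `P' = A + Q`:
`I + Q A⁻¹ = P' A⁻¹` and `I + P' S = P' (P'⁻¹ + S)`.
Taking determinants and logarithms, `log det P'` cancels and what remains is
`-log det (P'⁻¹ + S) - log det A = log det P₊ - log det P`. -/

namespace Matrix

variable {n : Type*} [Fintype n] [DecidableEq n] {K : Type*} [Field K]

lemma det_one_add_mul_inv {A : Matrix n n K} (hA : IsUnit A.det) (B : Matrix n n K) :
    (1 + B * A⁻¹).det = (A + B).det / A.det := by
  rw [← mul_nonsing_inv A hA, ← add_mul, det_mul, det_nonsing_inv, Ring.inverse_eq_inv',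
    div_eq_mul_inv]

lemma det_one_add_mul {A : Matrix n n K} (hA : IsUnit A.det) (B : Matrix n n K) :
    (1 + A * B).det = A.det * (A⁻¹ + B).det := by
  rw [← det_mul, mul_add, mul_nonsing_inv A hA]

theorem PosDef.log_det_inv_inv_add_sub_log_det {A Q S : Matrix n n ℝ} (hA : A.PosDef)
    (hQ : Q.PosSemidef) (hS : S.PosSemidef) :
    Real.log ((A + Q)⁻¹ + S)⁻¹.det - Real.log A.det =
      Real.log (1 + Q * A⁻¹).det - Real.log (1 + (A + Q) * S).det := by
  have hprior : (A + Q).PosDef := hA.add_posSemidef hQ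
  have hinfo : ((A + Q)⁻¹ + S).PosDef := hprior.inv.add_posSemidef hS
  rw [det_nonsing_inv, Ring.inverse_eq_inv', det_one_add_mul_inv hA.det_pos.ne'.isUnit,
    det_one_add_mul hprior.det_pos.ne'.isUnit, Real.log_inv,
    Real.log_div hprior.det_pos.ne' hA.det_pos.ne',
    Real.log_mul hprior.det_pos.ne' hinfo.det_pos.ne']
  ring

lemma PosDef.mul_mul_transpose_of_isUnit {A F : Matrix n n ℝ} (hA : A.PosDef) (hF : IsUnit F) :
    (F * A * Fᵀ).PosDef := by
  simpa only [conjTranspose_eq_transpose_of_trivial] using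
    hA.mul_mul_conjTranspose_same (vecMul_injective_iff_isUnit.2 hF)

end Matrix

open Matrix in
theorem time_space_diversity_decomposition
    (n : ℕ) (P F Q S : Matrix (Fin n) (Fin n) ℝ)
    (hP : P.PosDef) (hF : F.det = 1) (hQ : Q.PosSemidef) (hS : S.PosSemidef)
    (P' : Matrix (Fin n) (Fin n) ℝ) (hP' : P' = F * P * Fᵀ + Q)
    (Pplus : Matrix (Fin n) (Fin n) ℝ) (hPplus : Pplus = (P'⁻¹ + S)⁻¹) :
    Real.log Pplus.det - Real.log P.det =
      Real.log (1 + Q * (F * P * Fᵀ)⁻¹).det - Real.log (1 + P' * S).det := by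
  subst hP' hPplus
  have hFunit : IsUnit F := (isUnit_iff_isUnit_det F).2 (hF ▸ isUnit_one)
  have hdet : (F * P * Fᵀ).det = P.det := by simp [det_mul, hF]
  rw [← hdet]
  exact (hP.mul_mul_transpose_of_isUnit hFunit).log_det_inv_inv_add_sub_log_det hQ hS
end

section
/- Consider the left-invariant error system on SE(3) with state space ℝ⁶ = so(3) ⊕ ℝ³ undergoing straight-line, constant-attitude motion: the one-step transition matrices are Φ(t+1,t) = [[I₃, 0],[−c_t a^∧, I₃]], where a ∈ ℝ³ is a fixed direction, c_t ∈ ℝ are scalars, and a^∧ is the skew-symmetric matrix of a. Let the only sensor be a GPS position measurement H = [0 I₃] with noise covariance R ≻ 0. Then for every horizon T ≥ 1, the rotational direction about the axis of translation, namely the vector (a, 0) ∈ ℝ⁶, lies in the kernel of the observability Gramian W_o(T); i.e., rotation about the axis of translation remains unobservable for all time. -/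
/-! Since `a^∧ a = 0`, every one-step transition fixes `(a, 0)`, hence so does every `Φ(t, 0)`;
the sensor `H = [0 I₃]` annihilates `(a, 0)`, so each term of the Gramian does too. -/

open Matrix Finset

section

variable {R m n : Type*} [Fintype m] [Fintype n]

theorem fromBlocks_one_zero_one_mulVec_sumElim_zero [Semiring R] [DecidableEq m] [DecidableEq n]
    (C : Matrix n m R) (v : m → R) :
    fromBlocks (1 : Matrix m m R) 0 C (1 : Matrix n n R) *ᵥ Sum.elim v 0 =
      Sum.elim v (C *ᵥ v) := by
  simp [fromBlocks_mulVec]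

theorem mulVec_eq_self_of_steps_fix [Semiring R] [DecidableEq n]
    {Phi M : ℕ → Matrix n n R} {v : n → R} (hPhi0 : Phi 0 = 1)
    (hPhiSucc : ∀ t, Phi (t + 1) = M t * Phi t) (hM : ∀ t, M t *ᵥ v = v) (t : ℕ) :
    Phi t *ᵥ v = v := by
  induction t with
  | zero => simp [hPhi0]
  | succ t ih => rw [hPhiSucc, ← mulVec_mulVec, ih, hM]

theorem sum_gramian_mulVec_eq_zero [CommSemiring R] {k : Type*} [Fintype k]
    (Phi : ℕ → Matrix n n R) (H : Matrix k n R) (Q : Matrix k k R) {v : n → R}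
    (hv : ∀ t, H *ᵥ (Phi t *ᵥ v) = 0) (T : ℕ) :
    (∑ t ∈ range T, (Phi t)ᵀ * Hᵀ * Q * H * Phi t) *ᵥ v = 0 := by
  rw [sum_mulVec]
  refine sum_eq_zero fun t _ => ?_
  simp only [← mulVec_mulVec, hv, mulVec_zero]

end

theorem straight_line_axis_rotation_unobservable_general
    (a : Fin 3 → ℝ) (hatA : Matrix (Fin 3) (Fin 3) ℝ)
    (hHatA : ∀ x : Fin 3 → ℝ, hatA.mulVec x = crossProduct a x)
    (c : ℕ → ℝ)
    (Phi : ℕ → Matrix (Fin 3 ⊕ Fin 3) (Fin 3 ⊕ Fin 3) ℝ)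
    (hPhi0 : Phi 0 = 1)
    (hPhiSucc : ∀ t, Phi (t + 1) =
      Matrix.fromBlocks 1 0 ((-(c t)) • hatA) 1 * Phi t)
    (H : Matrix (Fin 3) (Fin 3 ⊕ Fin 3) ℝ)
    (hH : H = Matrix.fromCols 0 1)
    (Rn : Matrix (Fin 3) (Fin 3) ℝ)
    (W : ℕ → Matrix (Fin 3 ⊕ Fin 3) (Fin 3 ⊕ Fin 3) ℝ)
    (hW : ∀ T, W T = ∑ t ∈ Finset.range T, (Phi t)ᵀ * Hᵀ * Rn⁻¹ * H * Phi t) :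
    ∀ T, 1 ≤ T → (W T).mulVec (Sum.elim a 0) = 0 := by
  have hatA_axis : hatA *ᵥ a = 0 := by rw [hHatA, cross_self]
  have hPhi_axis : ∀ t, Phi t *ᵥ Sum.elim a 0 = Sum.elim a 0 :=
    mulVec_eq_self_of_steps_fix hPhi0 hPhiSucc fun t => by
      rw [fromBlocks_one_zero_one_mulVec_sumElim_zero, smul_mulVec, hatA_axis, smul_zero]
  intro T _
  rw [hW]
  refine sum_gramian_mulVec_eq_zero Phi H Rn⁻¹ (fun t => ?_) T
  rw [hPhi_axis, hH, fromCols_mulVec_sumElim, zero_mulVec, one_mulVec, add_zero, Pi.zero_def]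

open Matrix Finset in
theorem straight_line_axis_rotation_unobservable
    (a : Fin 3 → ℝ) (hatA : Matrix (Fin 3) (Fin 3) ℝ)
    (hHatA : ∀ x : Fin 3 → ℝ, hatA.mulVec x = crossProduct a x)
    (c : ℕ → ℝ)
    (Phi : ℕ → Matrix (Fin 3 ⊕ Fin 3) (Fin 3 ⊕ Fin 3) ℝ)
    (hPhi0 : Phi 0 = 1)
    (hPhiSucc : ∀ t, Phi (t + 1) =
      Matrix.fromBlocks 1 0 ((-(c t)) • hatA) 1 * Phi t)
    (H : Matrix (Fin 3) (Fin 3 ⊕ Fin 3) ℝ)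
    (hH : H = Matrix.fromCols 0 1)
    (Rn : Matrix (Fin 3) (Fin 3) ℝ) (hRn : Rn.PosDef)
    (W : ℕ → Matrix (Fin 3 ⊕ Fin 3) (Fin 3 ⊕ Fin 3) ℝ)
    (hW : ∀ T, W T = ∑ t ∈ Finset.range T, (Phi t)ᵀ * Hᵀ * Rn⁻¹ * H * Phi t) :
    ∀ T, 1 ≤ T → (W T).mulVec (Sum.elim a 0) = 0 :=
  straight_line_axis_rotation_unobservable_general a hatA hHatA c Phi hPhi0 hPhiSucc H hH Rn W hW
end
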